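/- Let M and N be monoids, let A be a right M-act, and let B be a right N-act. If the wreath product A≀B is a finitely presented 𝒲(M,N|A)-act, then A is a finitely presented M-act and B is a finitely presented N-act. -/

import Mathlib

/-!
Let `a x, b x` be the components of the images of the generators `x ∈ X` of a finite
presentation of `A ≀ B`. They generate `A` and `B`, so the pairs `(a x, b y)` generate `A ≀ B`,
and since finite presentability does not depend on the finite generating set, the relations
among these pairs are generated by finitely many. A relation `a x · m = a x' · n` of `A` is the
first component of the relation `(a x, b y)(m, 1) = (a x', b y)(n, 1)` of `A ≀ B`, and a relation
`b y · ν = b y' · μ` of `B` is the second component of `(a x, b y)(1, ν) = (a x, b y')(1, μ)`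
(constant maps `A → N`). Projecting the finitely many defining relations in the same way
therefore presents `A` and `B`. The projection `((x, y), (m, θ)) ↦ (y, θ (a x))` to `B` is
equivariant only up to replacing the acting element `(m', θ')` by `θ' (a x · m)`, which depends
only on the image in `A ≀ B` and hence is constant on congruence classes.
-/

/-- The axioms for a right action of a monoid `M` on a set `A`:
`act a 1 = a` and `act a (m * n) = act (act a m) n`. -/
def IsAct {M A : Type*} [Monoid M] (act : A → M → A) : Prop :=
  (∀ a, act a 1 = a) ∧ ∀ a m n, act a (m * n) = act (act a m) n

/-- `U ⊆ A` is a generating set for the act `(A, act)`: every element of `A`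
has the form `u m` with `u ∈ U`, `m ∈ M`. -/
def Generates {M A : Type*} (act : A → M → A) (U : Set A) : Prop :=
  ∀ a : A, ∃ u ∈ U, ∃ m : M, act u m = a

/-- An act is finitely generated if it has a finite generating set. -/
def ActFG {M A : Type*} (act : A → M → A) : Prop :=
  ∃ U : Set A, U.Finite ∧ Generates act U

/-- The free `M`-act on a set `X`: the set `X × M` with action `(x, m) n = (x, m n)`. -/
def FreeAct (M : Type*) [Monoid M] (X : Type*) : X × M → M → X × M :=
  fun p m => (p.1, p.2 * m)

/-- The congruence on the act `(A, act)` generated by a set `R ⊆ A × A`: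
the smallest equivalence relation containing `R` that is compatible with the action. -/
def CongGen {M A : Type*} (act : A → M → A) (R : Set (A × A)) (a b : A) : Prop :=
  ∀ r : A → A → Prop, Equivalence r →
    (∀ x y (m : M), r x y → r (act x m) (act y m)) →
    (∀ p ∈ R, r p.1 p.2) → r a b

/-- An `M`-act `(A, act)` is finitely presented if it is defined by a presentation
`⟨X | R⟩` with `X` and `R` finite, i.e. there is a surjective `M`-equivariant map
`π : F_X → A` whose kernel is the congruence on `F_X` generated by `R`. -/
def ActFP (M : Type*) [Monoid M] {A : Type*} (act : A → M → A) : Prop :=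
  ∃ (X : Type) (_ : Finite X) (R : Set ((X × M) × (X × M))), R.Finite ∧
    ∃ π : X × M → A, Function.Surjective π ∧
      (∀ p m, π (FreeAct M X p m) = act (π p) m) ∧
      ∀ w₁ w₂ : X × M, π w₁ = π w₂ ↔ CongGen (FreeAct M X) R w₁ w₂

/-- The diagonal `M`-act: `M × M` with action `(a, b) c = (a c, b c)`. -/
def DiagAct (M : Type*) [Monoid M] : M × M → M → M × M :=
  fun p c => (p.1 * c, p.2 * c)

/-- The action of the wreath product monoid `𝒲(M, N | A)` (carried on `M × (A → N)`)
on the wreath product `A ≀ B` (carried on `A × B`): `(a, b)(m, θ) = (a m, b (a θ))`. -/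
def WreathAct {M N A B : Type*} (actA : A → M → A) (actB : B → N → B) :
    A × B → M × (A → N) → A × B :=
  fun p w => (actA p.1 w.1, actB p.2 (w.2 p.1))

/-- The multiplication of the wreath product monoid `𝒲(M, N | A)` on `M × (A → N)`:
`(m, θ)(n, φ) = (m n, θ · ᵐφ)`, where `a (θ · ᵐφ) = (a θ) ((a m) φ)`. -/
def wreathMul {M N A : Type*} [Monoid M] [Monoid N] (act : A → M → A) :
    M × (A → N) → M × (A → N) → M × (A → N) :=
  fun p q => (p.1 * q.1, fun a => p.2 a * q.2 (act a p.1))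

/-- The wreath product monoid `𝒲(M, N | A)` of `M` by `N` through the `M`-act `A`,
carried on the set `M × N^A`, with identity `(1_M, c_{1_N})`. -/
def WreathMonoid {M N A : Type*} [Monoid M] [Monoid N] (act : A → M → A)
    (hact : IsAct act) : Monoid (M × (A → N)) where
  mul := wreathMul act
  one := (1, fun _ => 1)
  npow := fun n x => @npowRec _ ⟨(1, fun _ => 1)⟩ ⟨wreathMul act⟩ n x
  npow_zero := fun _ => rfl
  npow_succ := fun _ _ => rfl
  mul_assoc := by
    rintro ⟨m, θ⟩ ⟨n, φ⟩ ⟨k, ψ⟩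
    show wreathMul act (wreathMul act _ _) _ = wreathMul act _ (wreathMul act _ _)
    simp [wreathMul, mul_assoc, hact.2]
  one_mul := by
    rintro ⟨m, θ⟩
    show wreathMul act (1, fun _ => 1) _ = _
    simp [wreathMul, hact.1]
  mul_one := by
    rintro ⟨m, θ⟩
    show wreathMul act _ (1, fun _ => 1) = _
    simp [wreathMul]

namespace CongGen

variable {W M C D : Type*} {actC : C → W → C} {actD : D → M → D} {R : Set (C × C)}
  {S : Set (D × D)} {a b c : C}

theorem refl (actC : C → W → C) (R : Set (C × C)) (a : C) : CongGen actC R a a :=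
  fun _ hr _ _ => hr.refl a

theorem symm (h : CongGen actC R a b) : CongGen actC R b a :=
  fun r hr hc hR => hr.symm (h r hr hc hR)

theorem trans (h₁ : CongGen actC R a b) (h₂ : CongGen actC R b c) : CongGen actC R a c :=
  fun r hr hc hR => hr.trans (h₁ r hr hc hR) (h₂ r hr hc hR)

theorem act (w : W) (h : CongGen actC R a b) : CongGen actC R (actC a w) (actC b w) :=
  fun r hr hc hR => hc _ _ w (h r hr hc hR)

theorem of_mem (hab : (a, b) ∈ R) : CongGen actC R a b :=
  fun _ _ _ hR => hR _ hab

/-- A generated congruence is carried along a map `φ` that is equivariant up to a change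
`κ` of the acting element, provided `κ` only depends on the congruence class. -/
theorem map (φ : C → D) (κ : C → W → M) (hφ : ∀ c w, φ (actC c w) = actD (φ c) (κ c w))
    (hκ : ∀ c c' w, CongGen actC R c c' → κ c w = κ c' w)
    (hRS : ∀ p ∈ R, CongGen actD S (φ p.1) (φ p.2)) (h : CongGen actC R a b) :
    CongGen actD S (φ a) (φ b) :=
  (h (fun c c' => CongGen actC R c c' ∧ CongGen actD S (φ c) (φ c'))
    ⟨fun c => ⟨refl _ _ c, refl _ _ _⟩, fun h => ⟨h.1.symm, h.2.symm⟩,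
      fun h₁ h₂ => ⟨h₁.1.trans h₂.1, h₁.2.trans h₂.2⟩⟩
    (fun c c' w hcc' => ⟨hcc'.1.act w, by
      rw [hφ, hφ, hκ c c' w hcc'.1]; exact hcc'.2.act _⟩)
    (fun p hp => ⟨of_mem hp, hRS p hp⟩)).2

theorem eq_of_equivariant {act : D → W → D} (σ : C → D) (hσ : ∀ c w, σ (actC c w) = act (σ c) w)
    (hR : ∀ p ∈ R, σ p.1 = σ p.2) (h : CongGen actC R a b) : σ a = σ b :=
  h (fun c c' => σ c = σ c') ⟨fun _ => rfl, Eq.symm, Eq.trans⟩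
    (fun c c' w hcc' => by rw [hσ, hσ, hcc']) hR

end CongGen

section FreeAct

variable {W X Y C : Type*} [Monoid W]

theorem freeAct_mk_one (x : X) (w : W) : FreeAct W X (x, 1) w = (x, w) := by
  simp [FreeAct]

theorem apply_mk_eq_act_apply_one {act : C → W → C} {π : X × W → C}
    (hπ : ∀ p w, π (FreeAct W X p w) = act (π p) w) (x : X) (w : W) :
    π (x, w) = act (π (x, 1)) w := by
  rw [← hπ, freeAct_mk_one]

def freeLift (α : Y → X × W) : Y × W → X × W :=
  fun p => FreeAct W X (α p.1) p.2

theorem freeLift_freeAct (α : Y → X × W) (p : Y × W) (w : W) :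
    freeLift α (FreeAct W Y p w) = FreeAct W X (freeLift α p) w := by
  simp [freeLift, FreeAct, mul_assoc]

theorem apply_freeLift {act : C → W → C} {π : X × W → C} {σ : Y × W → C}
    (hπ : ∀ p w, π (FreeAct W X p w) = act (π p) w)
    (hσ : ∀ p w, σ (FreeAct W Y p w) = act (σ p) w)
    {α : Y → X × W} (hα : ∀ y, π (α y) = σ (y, 1)) (p : Y × W) :
    π (freeLift α p) = σ p := by
  obtain ⟨y, w⟩ := p
  rw [freeLift, hπ, hα, ← hσ, freeAct_mk_one]

end FreeAct

def HasFGKernel (W : Type*) [Monoid W] {Y C : Type*} (σ : Y × W → C) : Prop :=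
  ∃ R : Set ((Y × W) × (Y × W)), R.Finite ∧
    ∀ u v, σ u = σ v ↔ CongGen (FreeAct W Y) R u v

theorem ActFP.hasFGKernel {W C : Type*} [Monoid W] {act : C → W → C} (h : ActFP W act)
    {Y : Type*} [Finite Y] {σ : Y × W → C} (hσs : Function.Surjective σ)
    (hσ : ∀ p w, σ (FreeAct W Y p w) = act (σ p) w) : HasFGKernel W σ := by
  obtain ⟨X, _, R, hR, π, hπs, hπ, hπR⟩ := h
  choose α hα using fun y : Y => hπs (σ (y, 1))
  choose β hβ using fun x : X => hσs (π (x, 1))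
  have hπf : ∀ p, π (freeLift α p) = σ p := apply_freeLift hπ hσ hα
  have hσg : ∀ p, σ (freeLift β p) = π p := apply_freeLift hσ hπ hβ
  set g := freeLift (W := W) β
  set f := freeLift (W := W) α
  -- the relations of `R` transported to `Y`, and each generator of `Y` identified with its
  -- expression through `X`
  let S := ((fun p => (g p.1, g p.2)) '' R) ∪ Set.range fun y : Y => ((y, (1 : W)), g (f (y, 1)))
  have hgf (p : Y × W) : CongGen (FreeAct W Y) S p (g (f p)) := by
    obtain ⟨y, w⟩ := p
    have : CongGen (FreeAct W Y) S (y, 1) (g (f (y, 1))) := CongGen.of_mem (Or.inr ⟨y, rfl⟩)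
    have := this.act w
    rwa [← freeLift_freeAct, ← freeLift_freeAct, freeAct_mk_one] at this
  refine ⟨S, (hR.image _).union (Set.finite_range _), fun u v => ⟨fun huv => ?_, fun huv => ?_⟩⟩
  · have hfuv : CongGen (FreeAct W X) R (f u) (f v) := (hπR _ _).1 (by rw [hπf, hπf, huv])
    have := hfuv.map (S := S) g (fun _ w => w) (freeLift_freeAct β) (fun _ _ _ _ => rfl)
      fun p hp => CongGen.of_mem (Or.inl ⟨p, hp, rfl⟩)
    exact (hgf u).trans (this.trans (hgf v).symm)
  · refine huv.eq_of_equivariant σ hσ ?_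
    rintro _ (⟨p, hp, rfl⟩ | ⟨y, rfl⟩)
    · simp only [hσg, (hπR _ _).2 (CongGen.of_mem hp)]
    · simp only [hσg, hπf]

theorem actFP_of_ker_eq_image {W M Y C D : Type*} [Monoid W] [Monoid M] {Z : Type} [Finite Z]
    {actD : D → M → D} {P : Y × W → C} (hP : HasFGKernel W P)
    {τ : Z × M → D} (hτs : Function.Surjective τ) (hτ : ∀ p m, τ (FreeAct M Z p m) = actD (τ p) m)
    (φ : Y × W → Z × M) (κ : Y × W → W → M)
    (hφ : ∀ p w, φ (FreeAct W Y p w) = FreeAct M Z (φ p) (κ p w))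
    (hκ : ∀ p q w, P p = P q → κ p w = κ q w)
    (hτφ : ∀ p q, P p = P q → τ (φ p) = τ (φ q))
    (hlift : ∀ u v, τ u = τ v → ∃ p q, P p = P q ∧ φ p = u ∧ φ q = v) :
    ActFP M actD := by
  obtain ⟨R, hR, hPR⟩ := hP
  refine ⟨Z, inferInstance, (fun p => (φ p.1, φ p.2)) '' R, hR.image _, τ, hτs, hτ,
    fun u v => ⟨fun huv => ?_, fun huv => ?_⟩⟩
  · obtain ⟨p, q, hpq, rfl, rfl⟩ := hlift u v huv
    exact ((hPR p q).1 hpq).map φ κ hφ (fun p q w h => hκ p q w ((hPR p q).2 h))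
      fun r hr => CongGen.of_mem ⟨r, hr, rfl⟩
  · refine huv.eq_of_equivariant τ hτ ?_
    rintro _ ⟨r, hr, rfl⟩
    exact hτφ _ _ ((hPR _ _).2 (CongGen.of_mem hr))

section Wreath

variable {M N A B : Type*} [Monoid M] [Monoid N] {actA : A → M → A} {actB : B → N → B}

theorem isAct_wreathAct (hA : IsAct actA) (hB : IsAct actB) :
    @IsAct _ _ (WreathMonoid (N := N) actA hA) (WreathAct actA actB) :=
  ⟨fun _ => Prod.ext (hA.1 _) (hB.1 _), fun _ _ _ => Prod.ext (hA.2 _ _ _) (hB.2 _ _ _)⟩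

theorem ActFP.exists_wreath_generators [Nonempty A] [Nonempty B] (hA : IsAct actA)
    (hB : IsAct actB)
    (h : @ActFP (M × (A → N)) (WreathMonoid actA hA) (A × B) (WreathAct actA actB)) :
    ∃ (X : Type) (_ : Finite X) (_ : Nonempty X) (a : X → A) (b : X → B),
      (∀ a', ∃ x m, actA (a x) m = a') ∧ (∀ b', ∃ x ν, actB (b x) ν = b') ∧
      @HasFGKernel (M × (A → N)) (WreathMonoid actA hA) _ _
        fun p : (X × X) × (M × (A → N)) => WreathAct actA actB (a p.1.1, b p.1.2) p.2 := by
  -- the wreath product monoid structure, not the product monoid `M × (A → N)`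
  let := WreathMonoid (N := N) actA hA
  obtain ⟨X, hX, R, hR, π, hπs, hπ, hπR⟩ := h
  have hgen (c : A × B) : ∃ x w, WreathAct actA actB (π (x, 1)) w = c := by
    obtain ⟨⟨x, w⟩, rfl⟩ := hπs c
    exact ⟨x, w, (apply_mk_eq_act_apply_one hπ x w).symm⟩
  have ha (a' : A) : ∃ x m, actA (π (x, 1)).1 m = a' := by
    obtain ⟨x, w, hx⟩ := hgen (a', Classical.arbitrary B)
    exact ⟨x, w.1, congrArg Prod.fst hx⟩
  have hb (b' : B) : ∃ x ν, actB (π (x, 1)).2 ν = b' := by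
    obtain ⟨x, w, hx⟩ := hgen (Classical.arbitrary A, b')
    exact ⟨x, w.2 (π (x, 1)).1, congrArg Prod.snd hx⟩
  refine ⟨X, hX, hπs.nonempty.map Prod.fst, fun x => (π (x, 1)).1,
    fun x => (π (x, 1)).2, ha, hb, ActFP.hasFGKernel ⟨X, hX, R, hR, π, hπs, hπ, hπR⟩ ?_ ?_⟩
  · rintro ⟨a', b'⟩
    obtain ⟨x, m, rfl⟩ := ha a'
    obtain ⟨y, ν, rfl⟩ := hb b'
    exact ⟨((x, y), (m, fun _ => ν)), rfl⟩
  · intro p w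
    exact (isAct_wreathAct hA hB).2 _ _ _

theorem actFP_left_of_wreath_kernel {X : Type} [Finite X] [Nonempty X] {a : X → A} {b : X → B}
    (hA : IsAct actA) (ha : ∀ a', ∃ x m, actA (a x) m = a')
    (hP : @HasFGKernel (M × (A → N)) (WreathMonoid actA hA) _ _
      fun p : (X × X) × (M × (A → N)) => WreathAct actA actB (a p.1.1, b p.1.2) p.2) :
    ActFP M actA := by
  let := WreathMonoid (N := N) actA hA
  refine actFP_of_ker_eq_image hP (τ := fun p : X × M => actA (a p.1) p.2) ?_
    (fun _ _ => hA.2 _ _ _) (fun p => (p.1.1, p.2.1)) (fun _ w => w.1) (fun _ _ => rfl)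
    (fun _ _ _ _ => rfl) (fun _ _ h => congrArg Prod.fst h) ?_
  · intro a'
    obtain ⟨x, m, hx⟩ := ha a'
    exact ⟨(x, m), hx⟩
  · rintro ⟨x, m⟩ ⟨x', n⟩ h
    let y := Classical.arbitrary X
    exact ⟨((x, y), (m, 1)), ((x', y), (n, 1)), Prod.ext h rfl, rfl, rfl⟩

theorem actFP_right_of_wreath_kernel {X : Type} [Finite X] [Nonempty X] {a : X → A} {b : X → B}
    (hA : IsAct actA) (hB : IsAct actB) (hb : ∀ b', ∃ x ν, actB (b x) ν = b')
    (hP : @HasFGKernel (M × (A → N)) (WreathMonoid actA hA) _ _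
      fun p : (X × X) × (M × (A → N)) => WreathAct actA actB (a p.1.1, b p.1.2) p.2) :
    ActFP N actB := by
  let := WreathMonoid (N := N) actA hA
  refine actFP_of_ker_eq_image hP (τ := fun p : X × N => actB (b p.1) p.2) ?_
    (fun _ _ => hB.2 _ _ _) (fun p => (p.1.2, p.2.2 (a p.1.1)))
    (fun p w => w.2 (actA (a p.1.1) p.2.1)) (fun _ _ => rfl)
    (fun _ _ w h => congrArg (fun c => w.2 c.1) h) (fun _ _ h => congrArg Prod.snd h) ?_
  · intro b'
    obtain ⟨y, ν, hy⟩ := hb b'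
    exact ⟨(y, ν), hy⟩
  · rintro ⟨y, ν⟩ ⟨y', μ⟩ h
    let x := Classical.arbitrary X
    exact ⟨((x, y), (1, fun _ => ν)), ((x, y'), (1, fun _ => μ)), Prod.ext rfl h, rfl, rfl⟩

end Wreath

/-- If the wreath product `A ≀ B` is a finitely presented `𝒲(M, N | A)`-act, then `A`
is a finitely presented `M`-act and `B` is a finitely presented `N`-act. -/
theorem stmt18 {M N A B : Type*} [Monoid M] [Monoid N] [Nonempty A] [Nonempty B]
    (actA : A → M → A) (actB : B → N → B) (hA : IsAct actA) (hB : IsAct actB)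
    (h : @ActFP (M × (A → N)) (WreathMonoid (N := N) actA hA) (A × B)
      (WreathAct actA actB)) :
    ActFP M actA ∧ ActFP N actB := by
  obtain ⟨X, _, _, a, b, ha, hb, hP⟩ := h.exists_wreath_generators hA hB
  exact ⟨actFP_left_of_wreath_kernel hA ha hP, actFP_right_of_wreath_kernel hA hB hb hP⟩
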